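/- arXiv:1811.04430 — 2 statements merged into one kernel-verified Lean document; each statement's English description precedes it below -/
import Mathlib

section
/- Let A be a C*-algebra and let τ : A₊ → [0,∞] be an additive, positively homogeneous functional on the positive cone. If τ is finite on every element of the positive unit ball of A (i.e., pointwise finite on A₊ with norm at most 1), then τ is bounded on the positive unit ball: there exists M ≥ 0 such that τ(x) ≤ M for all positive x with ‖x‖ ≤ 1. -/
open scoped ENNReal NNReal

/-- An additive, positively homogeneous, monotone functional on the positive cone of a
C*-algebra which is pointwise finite on the positive unit ball is bounded on the
positive unit ball. -/
theorem pedersen_bounded_on_positive_unit_ball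
    {A : Type*} [CStarAlgebra A] [PartialOrder A] [StarOrderedRing A]
    (τ : A → ℝ≥0∞)
    (hadd : ∀ x y : A, 0 ≤ x → 0 ≤ y → τ (x + y) = τ x + τ y)
    (hhom : ∀ (r : ℝ) (x : A), 0 < r → 0 ≤ x → τ (r • x) = ENNReal.ofReal r * τ x)
    (hmono : ∀ x y : A, 0 ≤ x → x ≤ y → τ x ≤ τ y)
    (hfin : ∀ x : A, 0 ≤ x → ‖x‖ ≤ 1 → τ x ≠ ⊤) :
    ∃ M : ℝ≥0, ∀ x : A, 0 ≤ x → ‖x‖ ≤ 1 → τ x ≤ M := by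
  by_contra hcon
  push_neg at hcon
  -- choose witnesses
  have hch : ∀ n : ℕ, ∃ x : A, 0 ≤ x ∧ ‖x‖ ≤ 1 ∧
      ((n + 1 : ℝ≥0∞)) * (2 : ℝ≥0∞) ^ (n + 1) < τ x := by
    intro n
    obtain ⟨x, hx0, hx1, hx⟩ := hcon ((n + 1 : ℝ≥0) * 2 ^ (n + 1))
    refine ⟨x, hx0, hx1, lt_of_le_of_lt ?_ hx⟩
    push_cast
    simp
  choose x hx0 hx1 hxτ using hch
  set f : ℕ → A := fun n => ((2 : ℝ)⁻¹ ^ (n + 1)) • x n with hf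
  have hfpos : ∀ n, 0 ≤ f n := fun n => smul_nonneg (by positivity) (hx0 n)
  have hfnorm : ∀ n, ‖f n‖ ≤ (2 : ℝ)⁻¹ ^ (n + 1) := by
    intro n
    rw [hf, norm_smul]
    simp only [Real.norm_eq_abs, abs_of_nonneg (by positivity : (0:ℝ) ≤ (2:ℝ)⁻¹ ^ (n+1))]
    calc (2 : ℝ)⁻¹ ^ (n + 1) * ‖x n‖ ≤ (2 : ℝ)⁻¹ ^ (n + 1) * 1 := by
          exact mul_le_mul_of_nonneg_left (hx1 n) (by positivity)
      _ = _ := mul_one _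
  have hgsum : Summable (fun n : ℕ => (2 : ℝ)⁻¹ ^ (n + 1)) := by
    apply Summable.comp_injective (summable_geometric_of_lt_one (by norm_num) (by norm_num))
      (add_left_injective 1)
  have hsum : Summable f := Summable.of_norm_bounded hgsum hfnorm
  set y := ∑' n, f n with hy
  have hy0 : 0 ≤ y := tsum_nonneg hfpos
  have hnsum : Summable (fun n => ‖f n‖) :=
    hgsum.of_nonneg_of_le (fun n => norm_nonneg _) hfnorm
  have hynorm : ‖y‖ ≤ 1 := by
    calc ‖y‖ ≤ ∑' n, ‖f n‖ := norm_tsum_le_tsum_norm hnsum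
      _ ≤ ∑' n : ℕ, (2 : ℝ)⁻¹ ^ (n + 1) := Summable.tsum_le_tsum hfnorm hnsum hgsum
      _ = 1 := by
          have : ∀ n : ℕ, (2 : ℝ)⁻¹ ^ (n + 1) = 2⁻¹ * 2⁻¹ ^ n := fun n => pow_succ' _ _
          simp_rw [this]
          rw [tsum_mul_left, tsum_geometric_of_lt_one (by norm_num) (by norm_num)]
          norm_num
  have hle : ∀ n, f n ≤ y := fun n => Summable.le_tsum hsum n (fun j _ => hfpos j)
  have hτy : ∀ n : ℕ, (n + 1 : ℝ≥0∞) ≤ τ y := by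
    intro n
    have h1 : τ (f n) ≤ τ y := hmono _ _ (hfpos n) (hle n)
    have h2 : τ (f n) = ENNReal.ofReal ((2 : ℝ)⁻¹ ^ (n + 1)) * τ (x n) :=
      hhom _ _ (by positivity) (hx0 n)
    refine le_trans ?_ h1
    rw [h2]
    have h3 : ENNReal.ofReal ((2 : ℝ)⁻¹ ^ (n + 1)) = (2 : ℝ≥0∞)⁻¹ ^ (n + 1) := by
      rw [ENNReal.ofReal_pow (by norm_num)]
      congr 1
      rw [ENNReal.ofReal_inv_of_pos (by norm_num)]
      norm_num
    rw [h3]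
    calc (n + 1 : ℝ≥0∞) = (2 : ℝ≥0∞)⁻¹ ^ (n+1) * ((n + 1) * 2 ^ (n + 1)) := by
          rw [← mul_assoc, mul_comm ((2:ℝ≥0∞)⁻¹ ^ (n+1)), mul_assoc,
            ← ENNReal.inv_pow, ENNReal.inv_mul_cancel (by positivity) (by simp), mul_one]
      _ ≤ _ := mul_le_mul_right (hxτ n).le _
  obtain ⟨n, hn⟩ := ENNReal.exists_nat_gt (hfin y hy0 hynorm)
  exact absurd (hτy n) (by push_cast; exact not_le.2 (lt_of_lt_of_le hn (by simp)))
end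

section
/- Let V be a commutative monoid with cancellation and let G(V) be its Grothendieck group. The canonical map V ⊗ V → G(V) ⊗_ℤ G(V) induced by the tensor product of the inclusions i : V → G(V) satisfies: G(V ⊗ V) ≅ G(V) ⊗_ℤ G(V), where V ⊗ V denotes the tensor product of commutative monoids. -/
open scoped TensorProduct

/-- `i : V →+ G` is a Grothendieck group completion of the commutative monoid `V` if every
additive map from `V` into an abelian group factors uniquely through `i`. -/
def IsGrothendieckGroup {V G : Type*} [AddCommMonoid V] [AddCommGroup G] (i : V →+ G) : Prop :=
  ∀ (H : Type) [AddCommGroup H], ∀ f : V →+ H, ∃! g : G →+ H, g.comp i = f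

/-- For a cancellative commutative monoid `V` with Grothendieck group `G(V)` (witnessed by
`i : V →+ G`), the Grothendieck group of the monoid tensor product `V ⊗ V` is the tensor
product of abelian groups `G(V) ⊗_ℤ G(V)`, via the map sending `v ⊗ w` to `i v ⊗ i w`. -/
theorem grothendieckGroup_tensorProduct
    {V G : Type} [AddCancelCommMonoid V] [AddCommGroup G]
    (i : V →+ G) (hi : IsGrothendieckGroup i) :
    ∃ j : TensorProduct ℕ V V →+ TensorProduct ℤ G G,
      IsGrothendieckGroup j ∧ ∀ v w : V, j (v ⊗ₜ[ℕ] w) = i v ⊗ₜ[ℤ] i w := by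
  classical
  have huniq : ∀ (H : Type) [AddCommGroup H] (g₁ g₂ : G →+ H),
      g₁.comp i = g₂.comp i → g₁ = g₂ := by
    intro H _ g₁ g₂ h
    obtain ⟨u, -, hu⟩ := hi H (g₂.comp i)
    rw [hu g₁ h, hu g₂ rfl]
  have nsmul_tmul : ∀ (n : ℕ) (x y : G), (n • x) ⊗ₜ[ℤ] y = n • (x ⊗ₜ[ℤ] y) := by
    intro n x y
    rw [← natCast_zsmul, ← natCast_zsmul, TensorProduct.smul_tmul']
  have tmul_nsmul : ∀ (n : ℕ) (x y : G), x ⊗ₜ[ℤ] (n • y) = n • (x ⊗ₜ[ℤ] y) := by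
    intro n x y
    rw [← natCast_zsmul, ← natCast_zsmul, TensorProduct.tmul_smul]
  let L : V →ₗ[ℕ] V →ₗ[ℕ] (G ⊗[ℤ] G) := LinearMap.mk₂ ℕ (fun v w => i v ⊗ₜ[ℤ] i w)
    (fun v v' w => by simp [map_add, TensorProduct.add_tmul])
    (fun c v w => by simp [map_nsmul, nsmul_tmul])
    (fun v w w' => by simp [map_add, TensorProduct.tmul_add])
    (fun c v w => by simp [map_nsmul, tmul_nsmul])
  let j : TensorProduct ℕ V V →+ TensorProduct ℤ G G := (TensorProduct.lift L).toAddMonoidHom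
  have hj : ∀ v w : V, j (v ⊗ₜ[ℕ] w) = i v ⊗ₜ[ℤ] i w := fun v w => rfl
  refine ⟨j, ?_, hj⟩
  intro H _ f
  -- curry f
  let f₁ : V →+ (V →+ H) := AddMonoidHom.mk'
    (fun v => AddMonoidHom.mk' (fun w => f (v ⊗ₜ[ℕ] w))
      (fun w w' => by simp [TensorProduct.tmul_add, map_add]))
    (fun v v' => by
      ext w
      simp [TensorProduct.add_tmul, map_add])
  obtain ⟨e₁, he₁, -⟩ := hi (V →+ H) f₁
  let F : V →+ (G →+ H) := AddMonoidHom.mk'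
    (fun w => AddMonoidHom.mk' (fun a => e₁ a w)
      (fun a a' => by simp [map_add]))
    (fun w w' => by
      ext a
      simp [map_add])
  obtain ⟨e₂, he₂, -⟩ := hi (G →+ H) F
  let B : G →ₗ[ℤ] G →ₗ[ℤ] H := LinearMap.mk₂ ℤ (fun a b => e₂ b a)
    (fun a a' b => by simp [map_add])
    (fun c a b => by simp [map_zsmul])
    (fun a b b' => by simp [map_add])
    (fun c a b => by simp [map_zsmul])
  let g : (G ⊗[ℤ] G) →+ H := (TensorProduct.lift B).toAddMonoidHom
  have hg : g.comp j = f := by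
    ext x
    refine TensorProduct.induction_on x (by simp) (fun v w => ?_)
      (fun x y hx hy => by simp [map_add, hx, hy])
    have h1 : e₂ (i w) = F w := congrArg (fun φ => φ w) he₂
    have h2 : e₁ (i v) = f₁ v := congrArg (fun φ => φ v) he₁
    show g (i v ⊗ₜ[ℤ] i w) = f (v ⊗ₜ[ℕ] w)
    show e₂ (i w) (i v) = f (v ⊗ₜ[ℕ] w)
    rw [h1]
    show e₁ (i v) w = f (v ⊗ₜ[ℕ] w)
    rw [h2]
    rfl
  refine ⟨g, hg, ?_⟩
  intro g' hg'
  -- g' agrees with g on a ⊗ i w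
  have key1 : ∀ (w : V) (a : G), g' (a ⊗ₜ[ℤ] i w) = g (a ⊗ₜ[ℤ] i w) := by
    intro w
    let r : G →+ (G ⊗[ℤ] G) := AddMonoidHom.mk' (fun a => a ⊗ₜ[ℤ] i w)
      (fun a a' => TensorProduct.add_tmul a a' (i w))
    have := huniq H (g'.comp r) (g.comp r) (by
      ext v
      show g' (i v ⊗ₜ[ℤ] i w) = g (i v ⊗ₜ[ℤ] i w)
      have e1 : g' (j (v ⊗ₜ[ℕ] w)) = f (v ⊗ₜ[ℕ] w) := congrArg (fun φ => φ (v ⊗ₜ[ℕ] w)) hg'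
      have e2 : g (j (v ⊗ₜ[ℕ] w)) = f (v ⊗ₜ[ℕ] w) := congrArg (fun φ => φ (v ⊗ₜ[ℕ] w)) hg
      rw [hj] at e1 e2
      rw [e1, e2])
    intro a
    exact congrArg (fun φ => φ a) this
  have key2 : ∀ (a b : G), g' (a ⊗ₜ[ℤ] b) = g (a ⊗ₜ[ℤ] b) := by
    intro a b
    let s : G →+ (G ⊗[ℤ] G) := AddMonoidHom.mk' (fun b => a ⊗ₜ[ℤ] b)
      (fun b b' => TensorProduct.tmul_add a b b')
    have := huniq H (g'.comp s) (g.comp s) (by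
      ext w
      exact key1 w a)
    exact congrArg (fun φ => φ b) this
  ext x
  refine TensorProduct.induction_on x (by simp) key2
    (fun x y hx hy => by simp [map_add, hx, hy])
end
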